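/- arXiv:1701.06784 — 4 statements merged into one kernel-verified Lean document; each statement's English description precedes it below -/
import Mathlib

section
/- In the graph K_{d+1} ∗ K_d obtained by identifying a vertex of K_{d+1} with a vertex of K_d, the number of Hamiltonian subsets equals c(K_{d+1}) + c(K_d) = (3/2)·2^{d+1} - d^2 - 2d - 3, for d ≥ 3. -/
/-- The number of Hamiltonian subsets of a graph `G`. -/
noncomputable def hamCount {V : Type*} (G : SimpleGraph V) : ℕ :=
  Nat.card {A : Set V | ∃ (v : V) (p : G.Walk v v), p.IsCycle ∧ {u | u ∈ p.support} = A}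

/-- The graph `K_{d+1} ∗ K_d` on `2d` vertices: the vertices `0,…,d` form a clique with
`d+1` vertices, the vertices `d,…,2d-1` form a clique with `d` vertices, and the two
cliques share the single vertex `d`. -/
def cliqueGlue (d : ℕ) : SimpleGraph (Fin (2 * d)) :=
  SimpleGraph.fromRel (fun u v => (u.val ≤ d ∧ v.val ≤ d) ∨ (d ≤ u.val ∧ d ≤ v.val))

/-!
If every edge of a graph lies inside `L` or inside `R`, where `L ∪ R` is everything and `L ∩ R`
has at most one vertex, then every cycle stays inside `L` or inside `R`: otherwise both arcs of
the cycle between a vertex of `L \ R` and a vertex of `R \ L` would pass through the only vertex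
of `L ∩ R`. Conversely, a clique with at least three vertices carries a spanning cycle. Hence the
Hamiltonian subsets of `K_{d+1} ∗ K_d` (resp. `K_n`) are the sets of at least three vertices
inside one of the two cliques (resp. all of them), and an `n`-set has
`2 ^ n - 1 - n - n.choose 2` such subsets.
-/

open Finset

theorem Nat.choose_two_succ_add_choose_two (n : ℕ) : (n + 1).choose 2 + n.choose 2 = n ^ 2 := by
  induction n with
  | zero => rfl
  | succ n ih =>
    have h := Nat.choose_succ_succ' (n + 1) 1
    have h' := Nat.choose_succ_succ' n 1
    simp only [Nat.choose_one_right] at h h'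
    rw [h, h']
    nlinarith [ih, h']

lemma Finset.card_filter_card_lt_powerset {α : Type*} (s : Finset α) (m : ℕ) :
    #{t ∈ s.powerset | #t < m} = ∑ k ∈ range m, (#s).choose k := by
  classical
  have hunion : {t ∈ s.powerset | #t < m} = (range m).biUnion (powersetCard · s) := by
    ext t
    simp [and_comm]
  rw [hunion, card_biUnion fun i _ j _ hij => s.pairwise_disjoint_powersetCard hij]
  simp [card_powersetCard]

lemma Set.ncard_setOf_subset_three_le_ncard_add {α : Type*} {s : Set α} (hs : s.Finite) :
    {A : Set α | A ⊆ s ∧ 3 ≤ A.ncard}.ncard + (1 + s.ncard + s.ncard.choose 2) =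
      2 ^ s.ncard := by
  lift s to Finset α using hs
  have himage : {A : Set α | A ⊆ s ∧ 3 ≤ A.ncard} =
      (fun t : Finset α => (t : Set α)) '' ↑{t ∈ s.powerset | 3 ≤ #t} := by
    ext A
    simp only [Set.mem_ofPred_eq, Set.mem_image, coe_filter]
    constructor
    · rintro ⟨hA, h3⟩
      have hfin := s.finite_toSet.subset hA
      exact ⟨hfin.toFinset, by simpa [← Set.ncard_eq_toFinset_card A hfin] using ⟨hA, h3⟩⟩
    · rintro ⟨t, ⟨hts, h3⟩, rfl⟩
      exact ⟨by simpa using hts, by simpa using h3⟩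
  have hsplit := card_filter_add_card_filter_not (s := s.powerset) (fun t => 3 ≤ #t)
  simp only [not_le, card_filter_card_lt_powerset, card_powerset, sum_range_succ,
    sum_range_zero, Nat.choose_zero_right, Nat.choose_one_right] at hsplit
  rw [himage, Set.ncard_image_of_injective _ coe_injective, Set.ncard_coe_finset,
    Set.ncard_coe_finset]
  omega

lemma Fin.ncard_setOf_val_le {n d : ℕ} (hd : d < n) : {w : Fin n | w.val ≤ d}.ncard = d + 1 := by
  have himage : Fin.val '' {w : Fin n | w.val ≤ d} = Set.Iic d := by
    ext k
    simp only [Set.mem_image, Set.mem_Iic, Set.mem_ofPred_eq]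
    exact ⟨by rintro ⟨w, hw, rfl⟩; exact hw, fun hk => ⟨⟨k, by omega⟩, hk, rfl⟩⟩
  rw [← Set.ncard_image_of_injective _ Fin.val_injective, himage, Set.ncard_Iic_nat]

lemma Fin.ncard_setOf_le_val (n d : ℕ) : {w : Fin n | d ≤ w.val}.ncard = n - d := by
  have himage : Fin.val '' {w : Fin n | d ≤ w.val} = Set.Ico d n := by
    ext k
    simp only [Set.mem_image, Set.mem_Ico, Set.mem_ofPred_eq]
    exact ⟨by rintro ⟨w, hw, rfl⟩; exact ⟨hw, w.isLt⟩, fun hk => ⟨⟨k, hk.2⟩, hk.1, rfl⟩⟩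
  rw [← Set.ncard_image_of_injective _ Fin.val_injective, himage, Set.ncard_Ico_nat]

namespace SimpleGraph

variable {V : Type*} {G : SimpleGraph V}

def IsHamiltonianSubset (G : SimpleGraph V) (A : Set V) : Prop :=
  ∃ (v : V) (p : G.Walk v v), p.IsCycle ∧ {u | u ∈ p.support} = A

namespace Walk

lemma exists_mem_support_mem_inter {L R : Set V}
    (hG : ∀ ⦃x y⦄, G.Adj x y → x ∈ L ∧ y ∈ L ∨ x ∈ R ∧ y ∈ R) {u v : V} (p : G.Walk u v)
    (hu : u ∈ L) (hv : v ∉ L) : ∃ w ∈ p.support, w ∈ L ∧ w ∈ R := by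
  obtain ⟨e, he, hfst, hsnd⟩ := p.exists_boundary_dart L hu hv
  refine ⟨e.fst, p.dart_fst_mem_support_of_mem_darts he, hfst, ?_⟩
  rcases hG e.adj with h | h
  · exact absurd h.2 hsnd
  · exact h.1

lemma IsCycle.support_subset_or_subset {L R : Set V}
    (hG : ∀ ⦃x y⦄, G.Adj x y → x ∈ L ∧ y ∈ L ∨ x ∈ R ∧ y ∈ R)
    (hcover : ∀ x, x ∈ L ∨ x ∈ R) (hinter : (L ∩ R).Subsingleton) {v : V} {p : G.Walk v v}
    (hp : p.IsCycle) : {u | u ∈ p.support} ⊆ L ∨ {u | u ∈ p.support} ⊆ R := by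
  classical
  by_contra! h
  obtain ⟨y, hy, hyL⟩ := Set.not_subset.mp h.1
  obtain ⟨x, hx, hxR⟩ := Set.not_subset.mp h.2
  have hxL : x ∈ L := (hcover x).resolve_right hxR
  have hyR : y ∈ R := (hcover y).resolve_left hyL
  set c := p.rotate y hy
  have hxc : x ∈ c.support := (mem_support_rotate_iff ..).mpr hx
  obtain ⟨m₁, hm₁, hm₁R, hm₁L⟩ := (c.takeUntil x hxc).exists_mem_support_mem_inter
    (fun _ _ hab => (hG hab).symm) hyR hxR
  obtain ⟨m₂, hm₂, hm₂L, hm₂R⟩ := (c.dropUntil x hxc).exists_mem_support_mem_inter hG hxL hyL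
  have hm : m₁ = m₂ := hinter ⟨hm₁L, hm₁R⟩ ⟨hm₂L, hm₂R⟩
  have hnd : c.support.tail.Nodup := (hp.rotate hy).support_nodup
  rw [← c.take_spec hxc, tail_support_append, List.nodup_append] at hnd
  refine hnd.2.2 m₁ (((c.takeUntil x hxc).mem_support_iff).mp hm₁ |>.resolve_left ?_) m₂
    (((c.dropUntil x hxc).mem_support_iff).mp hm₂ |>.resolve_left ?_) hm
  · rintro rfl; exact hyL hm₁L
  · rintro rfl; exact hxR hm₂R

lemma IsCycle.three_le_ncard_support {v : V} {p : G.Walk v v} (hp : p.IsCycle) :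
    3 ≤ {u | u ∈ p.support}.ncard := by
  classical
  have hsupp : {u | u ∈ p.support} = ↑p.support.tail.toFinset := by
    ext u
    simp only [Set.mem_ofPred_eq, List.coe_toFinset, p.mem_support_iff, or_iff_right_iff_imp]
    rintro rfl
    exact end_mem_tail_support hp.not_nil
  rw [hsupp, Set.ncard_coe_finset, List.toFinset_card_of_nodup hp.support_nodup,
    List.length_tail, length_support]
  simpa using hp.three_le_length

end Walk

lemma IsHamiltonianSubset.three_le_ncard {A : Set V} (hA : G.IsHamiltonianSubset A) :
    3 ≤ A.ncard := by
  obtain ⟨v, p, hp, rfl⟩ := hA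
  exact hp.three_le_ncard_support

lemma IsClique.isHamiltonianSubset {s : Set V} (hs : G.IsClique s) (h3 : 3 ≤ s.ncard) :
    G.IsHamiltonianSubset s := by
  obtain ⟨n, hn⟩ : ∃ n, s.ncard = n + 3 := ⟨s.ncard - 3, by omega⟩
  have : Finite s := Set.finite_of_ncard_pos (by omega) |>.to_subtype
  let e : Fin (n + 3) ≃ s := (Finite.equivFinOfCardEq (by rwa [Nat.card_coe_set_eq])).symm
  let f : cycleGraph (n + 3) →g G :=
    ⟨fun i => e i, fun {i j} hij => hs (e i).2 (e j).2
      (Subtype.val_injective.ne (e.injective.ne hij.ne))⟩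
  have hf : Function.Injective f := Subtype.val_injective.comp e.injective
  have hham : (cycleGraph.cycle n).IsHamiltonianCycle :=
    Walk.isHamiltonianCycle_iff_isCycle_and_length_eq.mpr ⟨cycleGraph.isCycle_cycle, by simp⟩
  refine ⟨f 0, (cycleGraph.cycle n).map f,
    (Walk.isCycle_map_iff_of_injective hf).mpr hham.isCycle, ?_⟩
  ext u
  simp only [Walk.support_map, List.mem_map, hham.mem_support, true_and]
  exact ⟨by rintro ⟨i, rfl⟩; exact (e i).2, fun hu => ⟨e.symm ⟨u, hu⟩, by simp [f]⟩⟩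

lemma isHamiltonianSubset_top_iff {A : Set V} :
    (⊤ : SimpleGraph V).IsHamiltonianSubset A ↔ 3 ≤ A.ncard :=
  ⟨IsHamiltonianSubset.three_le_ncard, IsClique.isHamiltonianSubset (G := ⊤) fun _ _ _ _ h => h⟩

lemma isHamiltonianSubset_iff_of_adj_iff {L R : Set V}
    (hG : ∀ x y, G.Adj x y ↔ x ≠ y ∧ (x ∈ L ∧ y ∈ L ∨ x ∈ R ∧ y ∈ R))
    (hcover : ∀ x, x ∈ L ∨ x ∈ R) (hinter : (L ∩ R).Subsingleton) {A : Set V} :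
    G.IsHamiltonianSubset A ↔ 3 ≤ A.ncard ∧ (A ⊆ L ∨ A ⊆ R) := by
  refine ⟨fun hA => ⟨hA.three_le_ncard, ?_⟩, fun ⟨h3, hA⟩ => ?_⟩
  · obtain ⟨v, p, hp, rfl⟩ := hA
    exact hp.support_subset_or_subset (fun x y hxy => ((hG x y).mp hxy).2) hcover hinter
  · refine IsClique.isHamiltonianSubset (fun x hx y hy hxy => (hG x y).mpr ⟨hxy, ?_⟩) h3
    rcases hA with hA | hA
    · exact Or.inl ⟨hA hx, hA hy⟩
    · exact Or.inr ⟨hA hx, hA hy⟩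

lemma ncard_setOf_isHamiltonianSubset_of_adj_iff [Finite V] {L R : Set V}
    (hG : ∀ x y, G.Adj x y ↔ x ≠ y ∧ (x ∈ L ∧ y ∈ L ∨ x ∈ R ∧ y ∈ R))
    (hcover : ∀ x, x ∈ L ∨ x ∈ R) (hinter : (L ∩ R).Subsingleton) :
    {A | G.IsHamiltonianSubset A}.ncard =
      {A | A ⊆ L ∧ 3 ≤ A.ncard}.ncard + {A | A ⊆ R ∧ 3 ≤ A.ncard}.ncard := by
  have hsplit : {A | G.IsHamiltonianSubset A} =
      {A | A ⊆ L ∧ 3 ≤ A.ncard} ∪ {A | A ⊆ R ∧ 3 ≤ A.ncard} := by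
    ext A
    rw [Set.mem_ofPred_eq, isHamiltonianSubset_iff_of_adj_iff hG hcover hinter]
    simp only [Set.mem_union, Set.mem_ofPred_eq]
    tauto
  rw [hsplit, Set.ncard_union_eq]
  refine Set.disjoint_left.mpr fun A ⟨hAL, hA3⟩ ⟨hAR, _⟩ => ?_
  have := Set.ncard_le_one_iff_subsingleton.mpr (hinter.anti (Set.subset_inter hAL hAR))
  omega

end SimpleGraph

open SimpleGraph

lemma hamCount_eq_ncard {V : Type*} (G : SimpleGraph V) :
    hamCount G = {A | G.IsHamiltonianSubset A}.ncard :=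
  Nat.card_coe_set_eq _

lemma hamCount_top_add (V : Type*) [Finite V] :
    hamCount (⊤ : SimpleGraph V) + (1 + Nat.card V + (Nat.card V).choose 2) =
      2 ^ Nat.card V := by
  have h := Set.ncard_setOf_subset_three_le_ncard_add (Set.finite_univ (α := V))
  simpa [Set.ncard_univ, hamCount_eq_ncard, isHamiltonianSubset_top_iff] using h

lemma hamCount_cliqueGlue_add {d : ℕ} (hd : 1 ≤ d) :
    hamCount (cliqueGlue d) + (1 + (d + 1) + (d + 1).choose 2) + (1 + d + d.choose 2) =
      2 ^ (d + 1) + 2 ^ d := by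
  set L : Set (Fin (2 * d)) := {w | w.val ≤ d}
  set R : Set (Fin (2 * d)) := {w | d ≤ w.val}
  have hG : ∀ u v, (cliqueGlue d).Adj u v ↔ u ≠ v ∧ (u ∈ L ∧ v ∈ L ∨ u ∈ R ∧ v ∈ R) := by
    intro u v
    simp only [cliqueGlue, fromRel_adj, ne_eq, L, R, Set.mem_ofPred_eq]
    tauto
  have hinter : (L ∩ R).Subsingleton := by
    intro x hx y hy
    simp only [Set.mem_inter_iff, L, R, Set.mem_ofPred_eq] at hx hy
    exact Fin.ext (by omega)
  have hcountL := Set.ncard_setOf_subset_three_le_ncard_add L.toFinite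
  have hcountR := Set.ncard_setOf_subset_three_le_ncard_add R.toFinite
  rw [Fin.ncard_setOf_val_le (by omega)] at hcountL
  rw [Fin.ncard_setOf_le_val, show 2 * d - d = d by omega] at hcountR
  rw [hamCount_eq_ncard,
    ncard_setOf_isHamiltonianSubset_of_adj_iff hG (fun w => le_total w.val d) hinter]
  omega

/-- For `d ≥ 3`, the number of Hamiltonian subsets of `K_{d+1} ∗ K_d` equals
`c(K_{d+1}) + c(K_d) = (3/2)·2^{d+1} - d² - 2d - 3`. -/
theorem stmt_2 (d : ℕ) (hd : 3 ≤ d) :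
    hamCount (cliqueGlue d)
        = hamCount (⊤ : SimpleGraph (Fin (d + 1))) + hamCount (⊤ : SimpleGraph (Fin d)) ∧
    hamCount (cliqueGlue d) = 3 * 2 ^ d - d ^ 2 - 2 * d - 3 := by
  have hglue := hamCount_cliqueGlue_add (by omega : 1 ≤ d)
  have htop₁ := hamCount_top_add (Fin (d + 1))
  have htop₂ := hamCount_top_add (Fin d)
  rw [Nat.card_fin] at htop₁ htop₂
  have hchoose := Nat.choose_two_succ_add_choose_two d
  have hpow : 2 ^ (d + 1) = 2 * 2 ^ d := pow_succ' 2 d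
  constructor <;> omega
end

section
/- Let 0 < ε₁ ≤ 1/130 and d be sufficiently large. If H is an (ε₁, c'd)-expander produced by the Komlós–Szemerédi construction with average degree d(H) and minimum degree δ(H) ≥ d(H)/2, and ν := ε₁/(6 log²(5/c')), then H is νd-connected; i.e., H has no vertex cut of size less than νd. -/
/-- The expansion function `ε(x) = ε(x, ε₁, t)`: it is `0` for `x < t/5` and
`ε₁ / log²(15x/t)` for `x ≥ t/5`. -/
noncomputable def epsFn (ε₁ t x : ℝ) : ℝ :=
  if x < t / 5 then 0 else ε₁ / (Real.log (15 * x / t)) ^ 2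

/-- The average degree `2e(G)/|V(G)|` of a graph. -/
noncomputable def avgDeg {V : Type*} (G : SimpleGraph V) : ℝ :=
  2 * (Nat.card G.edgeSet : ℝ) / (Nat.card V : ℝ)

/-- `H` is an `(ε₁, t)`-expander: every vertex set `X` with `t/2 ≤ |X| ≤ |H|/2` has
external neighbourhood of size at least `ε(|X|)·|X|`. -/
def IsExpander {V : Type*} (H : SimpleGraph V) (ε₁ t : ℝ) : Prop :=
  ∀ X : Set V, t / 2 ≤ (X.ncard : ℝ) → (X.ncard : ℝ) ≤ (Nat.card V : ℝ) / 2 →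
    epsFn ε₁ t (X.ncard : ℝ) * (X.ncard : ℝ)
      ≤ (({v | v ∉ X ∧ ∃ u ∈ X, H.Adj u v} : Set V).ncard : ℝ)

/-!
If removing fewer than `νd` vertices `S` disconnected `H`, the smaller side `X` of the cut has
external neighbourhood inside `S`. A vertex of `X` has all its neighbours in `X ∪ S`, so the
minimum degree forces `|X| ≥ d/3`, and then expansion gives
`|S| ≥ ε(|X|)|X| ≥ ε₁ d / (3 log²(5/c')) = 2νd`, a contradiction. The estimate
`ε(x)x ≥ ε(d/3) d/3` for `x ≥ d/3` holds because `x / log²(a x)` is increasing once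
`log (a x) ≥ 2`.
-/

namespace SimpleGraph

variable {V : Type*} (H : SimpleGraph V)

def extNeighborSet (X : Set V) : Set V := {v | v ∉ X ∧ ∃ u ∈ X, H.Adj u v}

lemma insert_neighborSet_subset_union_extNeighborSet {X : Set V} {w : V} (hw : w ∈ X) :
    insert w (H.neighborSet w) ⊆ X ∪ H.extNeighborSet X := by
  rintro z (rfl | hz)
  · exact Or.inl hw
  · by_cases hzX : z ∈ X
    · exact Or.inl hzX
    · exact Or.inr ⟨hzX, w, hw, hz⟩

lemma ncard_neighborSet_lt_ncard_add_ncard_extNeighborSet [Finite V] {X : Set V} {w : V}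
    (hw : w ∈ X) : (H.neighborSet w).ncard < X.ncard + (H.extNeighborSet X).ncard :=
  calc (H.neighborSet w).ncard < (insert w (H.neighborSet w)).ncard := by
        rw [Set.ncard_insert_of_notMem (H.notMem_neighborSet_self)]; omega
    _ ≤ (X ∪ H.extNeighborSet X).ncard :=
        Set.ncard_le_ncard (H.insert_neighborSet_subset_union_extNeighborSet hw)
    _ ≤ X.ncard + (H.extNeighborSet X).ncard := Set.ncard_union_le _ _

lemma extNeighborSet_image_reachable_subset (S : Set V) (u : ↥Sᶜ) :
    H.extNeighborSet (Subtype.val '' {w | (H.induce Sᶜ).Reachable u w}) ⊆ S := by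
  rintro z ⟨hzX, _, ⟨y, hy, rfl⟩, hadj⟩
  by_contra hzS
  exact hzX ⟨⟨z, hzS⟩, hy.trans (Adj.reachable hadj), rfl⟩

lemma exists_extNeighborSet_subset_of_not_preconnected [Finite V] {S : Set V}
    (h : ¬ (H.induce Sᶜ).Preconnected) :
    ∃ X : Set V, X.Nonempty ∧ H.extNeighborSet X ⊆ S ∧ 2 * X.ncard ≤ Nat.card V := by
  obtain ⟨u, v, huv⟩ : ∃ u v, ¬ (H.induce Sᶜ).Reachable u v := by
    simpa [Preconnected] using h
  set A := Subtype.val '' {w | (H.induce Sᶜ).Reachable u w}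
  set B := Subtype.val '' {w | (H.induce Sᶜ).Reachable v w}
  have hAB : Disjoint A B := by
    rw [Set.disjoint_left]
    rintro _ ⟨x, hx, rfl⟩ ⟨y, hy, hyx⟩
    obtain rfl := Subtype.val_injective hyx
    exact huv (hx.trans hy.symm)
  have hsum : A.ncard + B.ncard ≤ Nat.card V := by
    rw [← Set.ncard_union_eq hAB, ← Set.ncard_univ]
    exact Set.ncard_le_ncard (Set.subset_univ _)
  rcases le_total A.ncard B.ncard with hle | hle
  · exact ⟨A, ⟨u, u, Reachable.refl _, rfl⟩,
      H.extNeighborSet_image_reachable_subset S u, by omega⟩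
  · exact ⟨B, ⟨v, v, Reachable.refl _, rfl⟩,
      H.extNeighborSet_image_reachable_subset S v, by omega⟩

end SimpleGraph

namespace Real

lemma two_le_log_of_ten_le {x : ℝ} (hx : 10 ≤ x) : 2 ≤ log x := by
  rw [le_log_iff_exp_le (by linarith), show (2 : ℝ) = 1 + 1 by norm_num, exp_add]
  nlinarith [exp_one_lt_three, exp_pos 1]

lemma log_add_le_mul_sqrt {r L : ℝ} (hr : 1 ≤ r) (hL : 2 ≤ L) : log r + L ≤ L * √r := by
  have hsqrt : 1 ≤ √r := one_le_sqrt.mpr hr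
  have hlog : log r = 2 * log √r := by rw [log_sqrt (by linarith)]; ring
  have := log_le_sub_one_of_pos (by linarith : 0 < √r)
  nlinarith

lemma div_log_sq_le_div_log_sq {a x y : ℝ} (ha : 0 < a) (hy : 0 < y) (hyx : y ≤ x)
    (hL : 2 ≤ log (a * y)) : y / log (a * y) ^ 2 ≤ x / log (a * x) ^ 2 := by
  set L := log (a * y)
  have hr : 1 ≤ x / y := (one_le_div hy).mpr hyx
  have hsplit : log (a * x) = log (x / y) + L := by
    rw [← log_mul (by positivity) (by positivity)]; congr 1; field_simp
  have hsq : log (a * x) ^ 2 ≤ x / y * L ^ 2 := by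
    calc log (a * x) ^ 2 = (log (x / y) + L) ^ 2 := by rw [hsplit]
      _ ≤ (L * √(x / y)) ^ 2 :=
          pow_le_pow_left₀ (by linarith [log_nonneg hr]) (log_add_le_mul_sqrt hr hL) 2
      _ = x / y * L ^ 2 := by rw [mul_pow, sq_sqrt (by positivity)]; ring
  rw [div_le_div_iff₀ (by positivity) (by nlinarith [log_nonneg hr])]
  calc y * log (a * x) ^ 2 ≤ y * (x / y * L ^ 2) := by gcongr
    _ = x * L ^ 2 := by field_simp

end Real

lemma div_log_sq_le_epsFn_mul {ε₁ t x y : ℝ} (hε : 0 ≤ ε₁) (ht : 0 < t)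
    (hty : t / 5 ≤ y) (hyx : y ≤ x) (hL : 2 ≤ Real.log (15 * y / t)) :
    ε₁ * y / Real.log (15 * y / t) ^ 2 ≤ epsFn ε₁ t x * x := by
  have hmono := Real.div_log_sq_le_div_log_sq (a := 15 / t) (by positivity) (by linarith)
    hyx (by rwa [div_mul_eq_mul_div])
  rw [div_mul_eq_mul_div, div_mul_eq_mul_div] at hmono
  rw [epsFn, if_neg (by linarith)]
  calc ε₁ * y / Real.log (15 * y / t) ^ 2 = ε₁ * (y / Real.log (15 * y / t) ^ 2) := by ring
    _ ≤ ε₁ * (x / Real.log (15 * x / t) ^ 2) := by gcongr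
    _ = ε₁ / Real.log (15 * x / t) ^ 2 * x := by ring

lemma mul_div_log_three_le_of_le_inv {C ε : ℝ} (hC : 0 < C) (hεC : ε ≤ 1 / (10 * C)) :
    C * ε / Real.log 3 ≤ 1 / 10 := by
  have hCε : C * ε ≤ 1 / 10 := by linarith [(le_div_iff₀ (by positivity)).mp hεC]
  rw [div_le_iff₀ (by linarith [Real.log_three_gt_d9])]
  linarith [Real.log_three_gt_d9]

theorem stmt_10_general (ε₁ : ℝ) (hε0 : 0 < ε₁) :
    ∃ d₀ : ℝ, ∀ d : ℝ, d₀ ≤ d →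
      ∀ (V : Type*) [Fintype V] (H : SimpleGraph V) (c' C : ℝ),
        0 < c' → c' < 1 / 2 → 12 < C → ε₁ ≤ 1 / (10 * C) →
        IsExpander H ε₁ (c' * d) →
        (1 - C * ε₁ / Real.log 3) * d ≤ avgDeg H →
        (∀ v : V, avgDeg H / 2 ≤ ((H.neighborSet v).ncard : ℝ)) →
        ∀ S : Set V, (S.ncard : ℝ) < (ε₁ / (6 * (Real.log (5 / c')) ^ 2)) * d →
          (H.induce Sᶜ).Preconnected := by
  refine ⟨0, fun d _ V _ H c' C hc0 hc2 hC hεC hexp havg hmin S hS => ?_⟩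
  by_contra hnc
  obtain ⟨X, ⟨w, hw⟩, hΓS, hXhalf⟩ := H.exists_extNeighborSet_subset_of_not_preconnected hnc
  set L := Real.log (5 / c')
  have hL : 2 ≤ L := Real.two_le_log_of_ten_le (by rw [le_div_iff₀ hc0]; linarith)
  have hd : 0 < d := pos_of_mul_pos_right ((Nat.cast_nonneg _).trans_lt hS) (by positivity)
  have hΓ : ((H.extNeighborSet X).ncard : ℝ) ≤ S.ncard := mod_cast Set.ncard_le_ncard hΓS
  have hdeg : ((H.neighborSet w).ncard : ℝ) < X.ncard + (H.extNeighborSet X).ncard :=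
    mod_cast H.ncard_neighborSet_lt_ncard_add_ncard_extNeighborSet hw
  have hε₀ := mul_div_log_three_le_of_le_inv (by linarith) hεC
  have hν : ε₁ / (6 * L ^ 2) ≤ 1 / 10 := by
    rw [div_le_iff₀ (by positivity)]; nlinarith [(le_div_iff₀ (by positivity)).mp hεC]
  -- `9d/20 ≤ (1 - ε₀)d/2 ≤ deg w < |X| + |S|` and `|S| < νd ≤ d/10`
  have hX : d / 3 ≤ X.ncard := by nlinarith [hmin w]
  have hexpX : epsFn ε₁ (c' * d) X.ncard * X.ncard ≤ (H.extNeighborSet X).ncard :=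
    hexp X (by nlinarith) (by rw [le_div_iff₀ two_pos]; exact_mod_cast (by omega))
  have h5 : 15 * (d / 3) / (c' * d) = 5 / c' := by field_simp; ring
  have hlower : ε₁ * (d / 3) / L ^ 2 ≤ epsFn ε₁ (c' * d) X.ncard * X.ncard := by
    simpa only [h5] using div_log_sq_le_epsFn_mul (t := c' * d) hε0.le (by positivity)
      (by nlinarith) hX (by rwa [h5])
  have hdouble : ε₁ * (d / 3) / L ^ 2 = 2 * (ε₁ / (6 * L ^ 2) * d) := by field_simp; ring
  linarith [mul_pos (by positivity : 0 < ε₁ / (6 * L ^ 2)) hd]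

/-- Let `0 < ε₁ ≤ 1/130` and let `d` be sufficiently large. If `H` is an
`(ε₁, c'd)`-expander produced by the Komlós–Szemerédi construction (so `c' < 1/2`,
`C > 12`, `ε₁ ≤ 1/(10C)`, `d(H) ≥ (1 - ε₀)d` where `ε₀ = Cε₁/log 3`, and
`δ(H) ≥ d(H)/2`), and `ν := ε₁/(6 log²(5/c'))`, then `H` is `νd`-connected: removing
any vertex set of size less than `νd` leaves a (pre)connected graph. -/
theorem stmt_10 (ε₁ : ℝ) (hε0 : 0 < ε₁) (hε1 : ε₁ ≤ 1 / 130) :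
    ∃ d₀ : ℝ, ∀ d : ℝ, d₀ ≤ d →
      ∀ (V : Type*) [Fintype V] (H : SimpleGraph V) (c' C : ℝ),
        0 < c' → c' < 1 / 2 → 12 < C → ε₁ ≤ 1 / (10 * C) →
        IsExpander H ε₁ (c' * d) →
        (1 - C * ε₁ / Real.log 3) * d ≤ avgDeg H →
        (∀ v : V, avgDeg H / 2 ≤ ((H.neighborSet v).ncard : ℝ)) →
        ∀ S : Set V, (S.ncard : ℝ) < (ε₁ / (6 * (Real.log (5 / c')) ^ 2)) * d →
          (H.induce Sᶜ).Preconnected :=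
  stmt_10_general ε₁ hε0
end

section
/- Let S be an (a,b)-sun with corona Cor(S). Then for any (not necessarily distinct) vertices u, v of S and any n ∈ ℕ, there exists a walk W in S from u to v such that every corona vertex x satisfies deg(x,W) ∈ {n, n+1, n+2} and every non-corona vertex x satisfies deg(x,W) ∈ {2n, 2n+1, 2n+2}, where deg(x,W) is the number of occurrences of x in W. -/
/-- Cyclic addition on `Fin a`: `cycAdd i m = (i + m) mod a`. -/
def cycAdd {a : ℕ} (i : Fin a) (m : ℕ) : Fin a :=
  ⟨(i.val + m) % a, Nat.mod_lt _ (Nat.lt_of_le_of_lt (Nat.zero_le _) i.isLt)⟩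

lemma cycAdd_zero {a : ℕ} (i : Fin a) : cycAdd i 0 = i :=
  Fin.ext (by simp [cycAdd, Nat.mod_eq_of_lt i.isLt])

lemma cycAdd_cycAdd {a : ℕ} (i : Fin a) (m m' : ℕ) :
    cycAdd (cycAdd i m) m' = cycAdd i (m + m') :=
  Fin.ext (by simp [cycAdd, Nat.mod_add_mod, Nat.add_assoc])

lemma cycAdd_self {a : ℕ} (i : Fin a) : cycAdd i a = i :=
  Fin.ext (by simp [cycAdd, Nat.add_mod_right, Nat.mod_eq_of_lt i.isLt])

lemma cycAdd_one_ne {a : ℕ} (ha : 2 ≤ a) (i : Fin a) : cycAdd i 1 ≠ i := by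
  intro h
  have h1 := congrArg Fin.val h
  have hi := i.isLt
  simp only [cycAdd] at h1
  rcases Nat.lt_or_ge (i.val + 1) a with h2 | h2
  · rw [Nat.mod_eq_of_lt h2] at h1; omega
  · have h3 : i.val + 1 = a := by omega
    rw [h3, Nat.mod_self] at h1; omega

lemma exists_cyc_unique {a : ℕ} (ha : 0 < a) (i0 i : Fin a) :
    ∃ k0, k0 < a ∧ cycAdd i0 (k0 + 1) = i ∧
      ∀ k, k < a → cycAdd i0 (k + 1) = i → k = k0 := by
  have hi0 := i0.isLt
  have hi := i.isLt
  set d := i.val + a - i0.val - 1 with hd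
  have key : (i0.val + (d % a + 1)) % a = i.val := by
    have h1 : (i0.val + (d % a + 1)) % a = (i0.val + (d + 1)) % a :=
      ((Nat.mod_modEq d a).add_right 1).add_left i0.val
    rw [h1]
    have h2 : i0.val + (d + 1) = i.val + a := by omega
    rw [h2, Nat.add_mod_right, Nat.mod_eq_of_lt hi]
  refine ⟨d % a, Nat.mod_lt _ ha, Fin.ext key, ?_⟩
  intro k hk hkeq
  have h1 : (i0.val + (k + 1)) % a = i.val := congrArg Fin.val hkeq
  have h3 : (i0.val + 1) + k ≡ (i0.val + 1) + (d % a) [MOD a] := by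
    have heq : (i0.val + (k + 1)) % a = (i0.val + (d % a + 1)) % a := by rw [h1, key]
    unfold Nat.ModEq
    convert heq using 2 <;> omega
  have h4 : k ≡ d % a [MOD a] := Nat.ModEq.add_left_cancel' _ h3
  have h5 : k % a = (d % a) % a := h4
  rw [Nat.mod_eq_of_lt hk, Nat.mod_eq_of_lt (Nat.mod_lt _ ha)] at h5
  exact h5

lemma walk_of_chain {V : Type*} {G : SimpleGraph V} (g : ℕ → V) :
    ∀ m : ℕ, (∀ k, k < m → G.Adj (g k) (g (k + 1))) →
      ∃ p : G.Walk (g 0) (g m), p.support = (List.range (m + 1)).map g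
  | 0, _ => ⟨SimpleGraph.Walk.nil, by simp [List.range_succ]⟩
  | (m + 1), h => by
    obtain ⟨p, hp⟩ := walk_of_chain g m (fun k hk => h k (by omega))
    refine ⟨p.concat (h m (by omega)), ?_⟩
    rw [SimpleGraph.Walk.support_concat, hp, List.range_succ (n := m+1), List.map_append]
    simp

lemma tail_support_append {V : Type*} {G : SimpleGraph V} {u v w : V}
    (p : G.Walk u v) (q : G.Walk v w) :
    (p.append q).support.tail = p.support.tail ++ q.support.tail := by
  rw [SimpleGraph.Walk.support_append]
  cases h : p.support with
  | nil => exact absurd h p.support_ne_nil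
  | cons a l => simp [h]

lemma copies_walk {V : Type*} [DecidableEq V] {G : SimpleGraph V} {w : V} (R : G.Walk w w) :
    ∀ n : ℕ, ∃ C : G.Walk w w, ∀ z, C.support.tail.count z = n * R.support.tail.count z
  | 0 => ⟨SimpleGraph.Walk.nil, by simp⟩
  | (n + 1) => by
    obtain ⟨C, hC⟩ := copies_walk R n
    refine ⟨R.append C, fun z => ?_⟩
    rw [tail_support_append, List.count_append, hC]
    ring

lemma count_map_range_eq_one {V : Type*} [DecidableEq V] (g : ℕ → V) (z : V) :
    ∀ (a k0 : ℕ), k0 < a → g k0 = z → (∀ k, k < a → g k = z → k = k0) →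
      ((List.range a).map g).count z = 1
  | 0, k0, h, _, _ => absurd h (by omega)
  | (a + 1), k0, hlt, hz, hu => by
    rw [List.range_succ, List.map_append, List.count_append]
    by_cases hk : k0 = a
    · have h0 : ((List.range a).map g).count z = 0 := by
        rw [List.count_eq_zero]
        intro hm
        simp only [List.mem_map, List.mem_range] at hm
        obtain ⟨k, hk', hg⟩ := hm
        have := hu k (by omega) hg
        omega
      have hga : g a = z := hk ▸ hz
      simp [h0, hga]
    · have h1 : ((List.range a).map g).count z = 1 :=
        count_map_range_eq_one g z a k0 (by omega) hz (fun k hk' => hu k (by omega))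
      have hga : g a ≠ z := fun h => hk ((hu a (by omega) h).symm)
      simp [h1, List.count_singleton', hga]

lemma count_map_range_eq_zero {V : Type*} [DecidableEq V] (g : ℕ → V) (z : V) (a : ℕ)
    (h : ∀ k, k < a → g k ≠ z) : ((List.range a).map g).count z = 0 := by
  rw [List.count_eq_zero]
  intro hm
  simp only [List.mem_map, List.mem_range] at hm
  obtain ⟨k, hk', hg⟩ := hm
  exact h k hk' hg

noncomputable def sunSub {V : Type*} {a b : ℕ} (x : Fin a → V) (y : Fin b → V)
    (idx : Fin b → Fin a) (i : Fin a) : V :=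
  if h : ∃ j, idx j = i then y h.choose else x i

lemma sunSub_x {V : Type*} {a b : ℕ} (x : Fin a → V) (y : Fin b → V)
    (idx : Fin b → Fin a) (i : Fin a) (h : ∀ j, idx j ≠ i) :
    sunSub x y idx i = x i := dif_neg (by push_neg; exact h)

lemma sunSub_y {V : Type*} {a b : ℕ} (x : Fin a → V) (y : Fin b → V)
    (idx : Fin b → Fin a) (hinj : Function.Injective idx) (j : Fin b) :
    sunSub x y idx (idx j) = y j := by
  have h : ∃ j', idx j' = idx j := ⟨j, rfl⟩
  rw [sunSub, dif_pos h]
  exact congrArg y (hinj h.choose_spec)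

lemma tail_map_range {V : Type*} (a : ℕ) (g : ℕ → V) :
    ((List.range (a + 1)).map g).tail = (List.range a).map (fun k => g (k + 1)) := by
  rw [List.range_succ_eq_map, List.map_cons, List.tail_cons, List.map_map]
  rfl

/-- Let `S` (here the graph `G`) be an `(a,b)`-sun: its vertices are the cycle vertices
`x i` and the sun vertices `y j`, its edges are exactly the cycle edges
`x i ~ x (i+1)` and the edges `y j ~ x (i_j - 1)`, `y j ~ x (i_j + 1)`, where the
distinguished positions `i_j = idx j` have pairwise cyclic gaps at least `2`. The
corona is `{x (idx j), y j : j}`. Then for any vertices `u, v` and any `n ∈ ℕ` there is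
a walk `W` from `u` to `v` in which every corona vertex occurs `n`, `n+1` or `n+2`
times and every other vertex occurs `2n`, `2n+1` or `2n+2` times. -/
theorem stmt_16 {V : Type*} [DecidableEq V] (G : SimpleGraph V) (a b : ℕ)
    (x : Fin a → V) (y : Fin b → V) (idx : Fin b → Fin a)
    (hxinj : Function.Injective x) (hyinj : Function.Injective y)
    (hdisj : ∀ i j, x i ≠ y j)
    (hcover : ∀ v : V, (∃ i, v = x i) ∨ (∃ j, v = y j))
    (hadj : ∀ u v : V, G.Adj u v ↔
      ((∃ i : Fin a, (u = x i ∧ v = x (cycAdd i 1)) ∨ (v = x i ∧ u = x (cycAdd i 1))) ∨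
       (∃ j : Fin b,
         (u = y j ∧ (v = x (cycAdd (idx j) (a - 1)) ∨ v = x (cycAdd (idx j) 1))) ∨
         (v = y j ∧ (u = x (cycAdd (idx j) (a - 1)) ∨ u = x (cycAdd (idx j) 1))))))
    (hgap : ∀ j k : Fin b, j ≠ k →
      idx j ≠ idx k ∧ idx j ≠ cycAdd (idx k) 1 ∧ idx k ≠ cycAdd (idx j) 1)
    (u v : V) (n : ℕ) :
    ∃ W : G.Walk u v, ∀ z : V,
      (z ∈ (Set.range fun j => x (idx j)) ∪ Set.range y →
        W.support.count z ∈ ({n, n + 1, n + 2} : Set ℕ)) ∧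
      (z ∉ (Set.range fun j => x (idx j)) ∪ Set.range y →
        W.support.count z ∈ ({2 * n, 2 * n + 1, 2 * n + 2} : Set ℕ)) := by
  classical
  -- nondegeneracy
  have ha0 : a ≠ 0 := by
    rintro rfl
    rcases hcover u with ⟨i, _⟩ | ⟨j, _⟩
    · exact i.elim0
    · exact (idx j).elim0
  have ha1 : a ≠ 1 := by
    rintro rfl
    have hA := (hadj (x 0) (x (cycAdd 0 1))).2 (Or.inl ⟨0, Or.inl ⟨rfl, rfl⟩⟩)
    have h0 : cycAdd (0 : Fin 1) 1 = 0 := Subsingleton.elim _ _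
    rw [h0] at hA
    exact G.loopless.irrefl _ hA
  have ha2 : 2 ≤ a := by omega
  have ha : 0 < a := by omega
  have hidxinj : Function.Injective idx := by
    intro j k h
    by_contra hne
    exact (hgap j k hne).1 h
  have hadjx : ∀ i : Fin a, G.Adj (x i) (x (cycAdd i 1)) := fun i =>
    (hadj _ _).2 (Or.inl ⟨i, Or.inl ⟨rfl, rfl⟩⟩)
  -- an unsubstituted basepoint
  obtain ⟨i0, hi0⟩ : ∃ i0 : Fin a, ∀ j, idx j ≠ i0 := by
    by_contra h
    push_neg at h
    obtain ⟨j, hj⟩ := h ⟨0, ha⟩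
    obtain ⟨k, hk⟩ := h (cycAdd ⟨0, ha⟩ 1)
    have hjk : j ≠ k := by
      rintro rfl
      exact Ne.symm (cycAdd_one_ne ha2 _) (hj.symm.trans hk)
    exact (hgap j k hjk).2.2 (by rw [hk, hj])
  -- adjacency for the substituted cycle
  have hadjf : ∀ i : Fin a, G.Adj (sunSub x y idx i) (sunSub x y idx (cycAdd i 1)) := by
    intro i
    by_cases h1 : ∃ j, idx j = i
    · obtain ⟨j, rfl⟩ := h1
      have h2 : ∀ k, idx k ≠ cycAdd (idx j) 1 := by
        intro k hk
        by_cases hjk : j = k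
        · subst hjk; exact cycAdd_one_ne ha2 _ hk.symm
        · exact (hgap j k hjk).2.2 hk
      rw [sunSub_y x y idx hidxinj, sunSub_x x y idx _ h2]
      exact (hadj _ _).2 (Or.inr ⟨j, Or.inl ⟨rfl, Or.inr rfl⟩⟩)
    · push_neg at h1
      rw [sunSub_x x y idx _ h1]
      by_cases h2 : ∃ k, idx k = cycAdd i 1
      · obtain ⟨k, hk⟩ := h2
        rw [← hk, sunSub_y x y idx hidxinj]
        have hprev : cycAdd (idx k) (a - 1) = i := by
          rw [hk, cycAdd_cycAdd]
          have h3 : 1 + (a - 1) = a := by omega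
          rw [h3, cycAdd_self]
        exact (hadj _ _).2 (Or.inr ⟨k, Or.inr ⟨rfl, Or.inl (congrArg x hprev.symm)⟩⟩)
      · push_neg at h2
        rw [sunSub_x x y idx _ h2]
        exact hadjx i
  -- the two traversals
  have hchain1 : ∀ k, k < a →
      G.Adj ((fun k => x (cycAdd i0 k)) k) ((fun k => x (cycAdd i0 k)) (k + 1)) := by
    intro k _
    have h := hadjx (cycAdd i0 k)
    rwa [cycAdd_cycAdd] at h
  have hchain2 : ∀ k, k < a →
      G.Adj ((fun k => sunSub x y idx (cycAdd i0 k)) k)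
        ((fun k => sunSub x y idx (cycAdd i0 k)) (k + 1)) := by
    intro k _
    have h := hadjf (cycAdd i0 k)
    rwa [cycAdd_cycAdd] at h
  obtain ⟨pA, hpA⟩ := walk_of_chain (fun k => x (cycAdd i0 k)) a hchain1
  obtain ⟨pB, hpB⟩ := walk_of_chain (fun k => sunSub x y idx (cycAdd i0 k)) a hchain2
  have e1 : x (cycAdd i0 0) = x i0 := congrArg x (cycAdd_zero i0)
  have e2 : x (cycAdd i0 a) = x i0 := congrArg x (cycAdd_self i0)
  have e3 : sunSub x y idx (cycAdd i0 0) = x i0 := by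
    rw [cycAdd_zero]; exact sunSub_x x y idx i0 hi0
  have e4 : sunSub x y idx (cycAdd i0 a) = x i0 := by
    rw [cycAdd_self]; exact sunSub_x x y idx i0 hi0
  obtain ⟨C, hC⟩ := copies_walk ((pA.copy e1 e2).append (pB.copy e3 e4)) n
  have hRtail : ((pA.copy e1 e2).append (pB.copy e3 e4)).support.tail =
      ((List.range a).map fun k => x (cycAdd i0 (k + 1))) ++
        ((List.range a).map fun k => sunSub x y idx (cycAdd i0 (k + 1))) := by
    rw [tail_support_append, SimpleGraph.Walk.support_copy, SimpleGraph.Walk.support_copy,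
      hpA, hpB, tail_map_range, tail_map_range]
  -- connectivity
  have hreachk : ∀ k : ℕ, G.Reachable (x i0) (x (cycAdd i0 k)) := by
    intro k
    induction k with
    | zero => rw [cycAdd_zero]
    | succ k ih =>
      have h := hadjx (cycAdd i0 k)
      rw [cycAdd_cycAdd] at h
      exact ih.trans h.reachable
  have hreachx : ∀ i : Fin a, G.Reachable (x i0) (x i) := by
    intro i
    obtain ⟨k0, _, hk0, _⟩ := exists_cyc_unique ha i0 i
    have h := hreachk (k0 + 1)
    rwa [hk0] at h
  have hreach : ∀ zz : V, G.Reachable (x i0) zz := by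
    intro zz
    rcases hcover zz with ⟨i, rfl⟩ | ⟨j, rfl⟩
    · exact hreachx i
    · have hAdj : G.Adj (y j) (x (cycAdd (idx j) 1)) :=
        (hadj _ _).2 (Or.inr ⟨j, Or.inl ⟨rfl, Or.inr rfl⟩⟩)
      exact (hreachx _).trans hAdj.symm.reachable
  obtain ⟨p1⟩ := hreach u
  obtain ⟨p2⟩ := hreach v
  refine ⟨(p1.reverse.bypass).append (C.append p2.bypass), fun z => ?_⟩
  have hP1 : (p1.reverse.bypass).support.count z ≤ 1 :=
    List.nodup_iff_count_le_one.1 (p1.reverse.bypass_isPath.support_nodup) z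
  have hP2 : (p2.bypass).support.tail.count z ≤ 1 :=
    le_trans ((List.tail_sublist _).count_le z)
      (List.nodup_iff_count_le_one.1 (p2.bypass_isPath.support_nodup) z)
  have hWcount : ((p1.reverse.bypass).append (C.append p2.bypass)).support.count z
      = (p1.reverse.bypass).support.count z +
        (C.support.tail.count z + (p2.bypass).support.tail.count z) := by
    rw [SimpleGraph.Walk.support_append, List.count_append, tail_support_append,
      List.count_append]
  constructor
  · intro hz
    simp only [Set.mem_union, Set.mem_range] at hz
    have key : (((pA.copy e1 e2).append (pB.copy e3 e4)).support.tail).count z = 1 := by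
      rw [hRtail, List.count_append]
      rcases hz with ⟨j, hj⟩ | ⟨j, hj⟩
      · subst hj
        obtain ⟨k0, hk0lt, hk0, hk0u⟩ := exists_cyc_unique ha i0 (idx j)
        have c1 : ((List.range a).map fun k => x (cycAdd i0 (k + 1))).count (x (idx j)) = 1 :=
          count_map_range_eq_one _ _ a k0 hk0lt (congrArg x hk0)
            (fun k hk hkeq => hk0u k hk (hxinj hkeq))
        have c2 : ((List.range a).map fun k =>
            sunSub x y idx (cycAdd i0 (k + 1))).count (x (idx j)) = 0 := by
          apply count_map_range_eq_zero
          intro k hk heq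
          by_cases hs : ∃ j', idx j' = cycAdd i0 (k + 1)
          · obtain ⟨j', hj'⟩ := hs
            rw [← hj', sunSub_y x y idx hidxinj] at heq
            exact hdisj _ _ heq.symm
          · push_neg at hs
            rw [sunSub_x x y idx _ hs] at heq
            exact hs j (hxinj heq).symm
        omega
      · subst hj
        have c1 : ((List.range a).map fun k => x (cycAdd i0 (k + 1))).count (y j) = 0 :=
          count_map_range_eq_zero _ _ a (fun k hk heq => hdisj _ _ heq)
        obtain ⟨k0, hk0lt, hk0, hk0u⟩ := exists_cyc_unique ha i0 (idx j)
        have c2 : ((List.range a).map fun k =>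
            sunSub x y idx (cycAdd i0 (k + 1))).count (y j) = 1 := by
          apply count_map_range_eq_one _ _ a k0 hk0lt
          · rw [hk0]; exact sunSub_y x y idx hidxinj j
          · intro k hk heq
            by_cases hs : ∃ j', idx j' = cycAdd i0 (k + 1)
            · obtain ⟨j', hj'⟩ := hs
              rw [← hj', sunSub_y x y idx hidxinj] at heq
              have hjj : j' = j := hyinj heq
              exact hk0u k hk (by rw [← hj', hjj])
            · push_neg at hs
              rw [sunSub_x x y idx _ hs] at heq
              exact absurd heq (hdisj _ _)
        omega
    rw [hWcount, hC z, key]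
    simp only [Set.mem_insert_iff, Set.mem_singleton_iff]
    omega
  · intro hz
    obtain ⟨i, rfl, hunsub⟩ : ∃ i : Fin a, z = x i ∧ ∀ j, idx j ≠ i := by
      rcases hcover z with ⟨i, rfl⟩ | ⟨j, rfl⟩
      · refine ⟨i, rfl, ?_⟩
        intro j hj
        exact hz (Set.mem_union_left _ (Set.mem_range.mpr ⟨j, by simp [hj]⟩))
      · exact absurd (Set.mem_union_right _ (Set.mem_range_self j)) hz
    have key : (((pA.copy e1 e2).append (pB.copy e3 e4)).support.tail).count (x i) = 2 := by
      rw [hRtail, List.count_append]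
      obtain ⟨k0, hk0lt, hk0, hk0u⟩ := exists_cyc_unique ha i0 i
      have c1 : ((List.range a).map fun k => x (cycAdd i0 (k + 1))).count (x i) = 1 :=
        count_map_range_eq_one _ _ a k0 hk0lt (congrArg x hk0)
          (fun k hk hkeq => hk0u k hk (hxinj hkeq))
      have c2 : ((List.range a).map fun k =>
          sunSub x y idx (cycAdd i0 (k + 1))).count (x i) = 1 := by
        apply count_map_range_eq_one _ _ a k0 hk0lt
        · rw [hk0]; exact sunSub_x x y idx i hunsub
        · intro k hk heq
          by_cases hs : ∃ j', idx j' = cycAdd i0 (k + 1)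
          · obtain ⟨j', hj'⟩ := hs
            rw [← hj', sunSub_y x y idx hidxinj] at heq
            exact absurd heq.symm (hdisj _ _)
          · push_neg at hs
            rw [sunSub_x x y idx _ hs] at heq
            exact hk0u k hk (hxinj heq)
      omega
    rw [hWcount, hC _, key]
    simp only [Set.mem_insert_iff, Set.mem_singleton_iff]
    omega
end

section
/- Let Z be a set of size 200d (d ≥ 1) and suppose that for every subset U of Z of size 100d there is assigned a finite set C_U (a cycle's vertex set) whose intersection with Z has size between 98d and 100d and is contained in U. Then the number of distinct sets among {C_U : U ∈ (Z choose 100d)} is at least (200d choose 100d)/(102d choose 2d) ≥ 2^{50d}. -/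
/-!
A value `V` of `C` determines `S = V ∩ Z`, a set of at least `98d` elements of `Z` lying in every
`U` with `C U = V`; hence at most `(200d - |S| choose 100d - |S|) ≤ (102d choose 2d)` sets `U`
share the value `V`. The numeric bound follows from `4^{100d} ≤ 200d · (200d choose 100d)` and
`(102d choose 2d) ≤ 2^{102d}`, since `200d ≤ 2^{48d}`.
-/

open Finset

theorem Nat.choose_sub_sub_le : ∀ {n k j : ℕ}, j ≤ k → k ≤ n →
    (n - j).choose (k - j) ≤ n.choose k
  | _, _, 0, _, _ => le_rfl
  | n + 1, k + 1, j + 1, hj, hk => by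
    simpa only [Nat.add_sub_add_right] using
      (Nat.choose_sub_sub_le (n := n) (k := k) (j := j) (by omega) (by omega)).trans
        (Nat.choose_succ_succ n k ▸ Nat.le_add_right _ _)
  | 0, _ + 1, _ + 1, _, hk => by omega

theorem Nat.two_pow_mul_choose_le_choose {d : ℕ} (hd : 1 ≤ d) :
    2 ^ (50 * d) * (102 * d).choose (2 * d) ≤ (200 * d).choose (100 * d) := by
  have hcentral : 4 ^ (100 * d) ≤ 200 * d * (200 * d).choose (100 * d) := by
    have := Nat.four_pow_le_two_mul_self_mul_centralBinom (100 * d) (by omega)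
    simpa only [Nat.centralBinom_eq_two_mul_choose, ← mul_assoc, Nat.reduceMul] using this
  refine Nat.le_of_mul_le_mul_left ?_ (by omega : 0 < 200 * d)
  calc 200 * d * (2 ^ (50 * d) * (102 * d).choose (2 * d))
      ≤ 2 ^ (48 * d) * (2 ^ (50 * d) * 2 ^ (102 * d)) := by
        gcongr
        · calc 200 * d ≤ 2 ^ 8 * 2 ^ d := by have := d.lt_two_pow_self; omega
            _ = 2 ^ (d + 8) := by rw [← pow_add, add_comm]
            _ ≤ 2 ^ (48 * d) := Nat.pow_le_pow_right two_pos (by omega)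
        · exact Nat.choose_le_two_pow _ _
    _ = 4 ^ (100 * d) := by
        rw [← pow_add, ← pow_add, show (4 : ℕ) = 2 ^ 2 by rfl, ← pow_mul]; ring_nf
    _ ≤ 200 * d * (200 * d).choose (100 * d) := hcentral

namespace Finset

variable {α : Type*} [DecidableEq α]

theorem card_filter_superset_powersetCard_le {Z S : Finset α} {k s : ℕ} (hS : S ⊆ Z)
    (hkZ : k ≤ #Z) (hsS : s ≤ #S) (hSk : #S ≤ k) :
    #{U ∈ Z.powersetCard k | S ⊆ U} ≤ (#Z - s).choose (k - s) := by
  calc #{U ∈ Z.powersetCard k | S ⊆ U}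
      ≤ #((Z \ S).powersetCard (k - #S)) := by
        refine card_le_card_of_injOn (· \ S) (fun U hU => ?_) (fun U hU U' hU' hUU' => ?_)
        · simp only [coe_filter, mem_powersetCard, Set.mem_ofPred_eq] at hU
          rw [mem_coe, mem_powersetCard]
          exact ⟨sdiff_subset_sdiff hU.1.1 le_rfl, by rw [card_sdiff_of_subset hU.2, hU.1.2]⟩
        · simp only [coe_filter, Set.mem_ofPred_eq] at hU hU'
          rw [← sdiff_union_of_subset hU.2, ← sdiff_union_of_subset hU'.2]
          exact congrArg (· ∪ S) hUU'
    _ = (#Z - s - (#S - s)).choose (k - s - (#S - s)) := by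
        rw [card_powersetCard, card_sdiff_of_subset hS]; congr 1 <;> omega
    _ ≤ (#Z - s).choose (k - s) := Nat.choose_sub_sub_le (by omega) (by omega)

theorem choose_le_choose_sub_mul_card_image {Z : Finset α} {k s : ℕ} (hkZ : k ≤ #Z)
    (C : Finset α → Finset α)
    (hC : ∀ U ∈ Z.powersetCard k, C U ∩ Z ⊆ U ∧ s ≤ #(C U ∩ Z)) :
    (#Z).choose k ≤ (#Z - s).choose (k - s) * #((Z.powersetCard k).image C) := by
  rw [← card_powersetCard]
  refine card_le_mul_card_image _ _ fun V hV => ?_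
  obtain ⟨U₀, hU₀, rfl⟩ := mem_image.mp hV
  obtain ⟨hU₀sub, hs⟩ := hC U₀ hU₀
  have hSk : #(C U₀ ∩ Z) ≤ k := (card_le_card hU₀sub).trans (mem_powersetCard.mp hU₀).2.le
  refine le_trans (card_le_card fun U hU => ?_)
    (card_filter_superset_powersetCard_le inter_subset_right hkZ hs hSk)
  rw [mem_filter] at hU ⊢
  exact ⟨hU.1, hU.2 ▸ (hC U hU.1).1⟩

end Finset

/-- Let `Z` have size `200d` (with `d ≥ 1`) and suppose each `100d`-subset `U` of `Z` is
assigned a finite set `C U` (the vertex set of a cycle) with `C U ∩ Z ⊆ U` and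
`98d ≤ |C U ∩ Z| ≤ 100d`. Then the number of distinct sets among the `C U` is at least
`(200d choose 100d)/(102d choose 2d)`, which is at least `2^{50d}`. -/
theorem stmt_18 {α : Type*} [DecidableEq α] (d : ℕ) (hd : 1 ≤ d)
    (Z : Finset α) (hZ : Z.card = 200 * d) (C : Finset α → Finset α)
    (hC : ∀ U ∈ Z.powersetCard (100 * d),
      (C U ∩ Z) ⊆ U ∧ 98 * d ≤ (C U ∩ Z).card ∧ (C U ∩ Z).card ≤ 100 * d) :
    (((200 * d).choose (100 * d) : ℝ) / ((102 * d).choose (2 * d) : ℝ)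
        ≤ (((Z.powersetCard (100 * d)).image C).card : ℝ)) ∧
    ((2 : ℝ) ^ (50 * d)
        ≤ ((200 * d).choose (100 * d) : ℝ) / ((102 * d).choose (2 * d) : ℝ)) := by
  have hB : (0 : ℝ) < (102 * d).choose (2 * d) := by exact_mod_cast Nat.choose_pos (by omega)
  have hcount := choose_le_choose_sub_mul_card_image (s := 98 * d) (by omega) C
    fun U hU => ⟨(hC U hU).1, (hC U hU).2.1⟩
  rw [hZ, show 200 * d - 98 * d = 102 * d by omega,
    show 100 * d - 98 * d = 2 * d by omega] at hcount
  constructor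
  · rw [div_le_iff₀ hB]
    exact_mod_cast hcount.trans_eq (mul_comm _ _)
  · rw [le_div_iff₀ hB]
    exact_mod_cast Nat.two_pow_mul_choose_le_choose hd
end
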